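/- arXiv:1809.06008 — 3 statements merged into one kernel-verified Lean document; each statement's English description precedes it below -/
import Mathlib

section
/- The negative entropy function d(x) = ∑_{i=1}^m x(i) log x(i) - x(i) is 1-strongly convex with respect to the ℓ₁-norm on the probability simplex Δ_m = {x ∈ ℝ^m : x ≥ 0, ∑_i x(i) = 1}, i.e., for all x, y in the relative interior of Δ_m, d(y) ≥ d(x) + ⟨∇d(x), y - x⟩ + (1/2)‖y - x‖₁². -/
/-!
Pinsker's inequality. For `x, y > 0` the Bregman divergence `d(y) - d(x) - ⟨∇d(x), y - x⟩` is the
f-divergence `∑ᵢ xᵢ klFun (yᵢ / xᵢ)`, `klFun t = t log t + 1 - t`. Pointwise,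
`3 (t - 1)² ≤ (2t + 4) klFun t` for `t ≥ 0`: the difference has derivative
`4 ((t + 1) log t - 2 (t - 1))`, which is increasing (its derivative is `log t + 1/t - 1 ≥ 0`) and
vanishes at `t = 1`, so the difference is minimal at `t = 1`, where it is zero. Homogenising with
`t = yᵢ / xᵢ` and applying Cauchy–Schwarz with weights `(2yᵢ + 4xᵢ) / 3`, which sum to `2` on the
simplex, gives `(∑ᵢ |yᵢ - xᵢ|)² ≤ 2 ∑ᵢ xᵢ klFun (yᵢ / xᵢ)`.
-/

open Real Set Finset InformationTheory

lemma monotoneOn_add_one_mul_log_sub :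
    MonotoneOn (fun t : ℝ => (t + 1) * log t - 2 * (t - 1)) (Ioi 0) := by
  have hderiv : ∀ t ∈ Ioi (0 : ℝ), HasDerivAt (fun t : ℝ => (t + 1) * log t - 2 * (t - 1))
      (log t + t⁻¹ - 1) t := by
    intro t ht
    have := (((hasDerivAt_id t).add_const 1).mul (hasDerivAt_log (mem_Ioi.mp ht).ne')).sub
      (((hasDerivAt_id t).sub_const 1).const_mul 2)
    refine this.congr_deriv ?_
    simp only [id]
    field_simp [(mem_Ioi.mp ht).ne']
    ring
  refine monotoneOn_of_hasDerivWithinAt_nonneg (f' := fun t => log t + t⁻¹ - 1) (convex_Ioi 0)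
    (fun t ht => (hderiv t ht).continuousAt.continuousWithinAt) ?_ ?_ <;> rw [interior_Ioi]
  · exact fun t ht => (hderiv t ht).hasDerivWithinAt
  · intro t ht
    linarith [one_sub_inv_le_log_of_pos (mem_Ioi.mp ht)]

lemma three_mul_sub_one_sq_le_mul_klFun {t : ℝ} (ht : 0 ≤ t) :
    3 * (t - 1) ^ 2 ≤ (2 * t + 4) * klFun t := by
  set F : ℝ → ℝ := fun t => (2 * t + 4) * klFun t - 3 * (t - 1) ^ 2
  have hF : Continuous F := by fun_prop [continuous_klFun]
  have hderiv : ∀ s : ℝ, 0 < s → HasDerivAt F (4 * ((s + 1) * log s - 2 * (s - 1))) s := by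
    intro s hs
    have := (((hasDerivAt_id s).const_mul 2).add_const 4).mul (hasDerivAt_klFun hs.ne')
      |>.sub ((((hasDerivAt_id s).sub_const 1).pow 2).const_mul 3)
    refine this.congr_deriv ?_
    simp only [klFun_apply, id]
    ring
  have hdiff : DifferentiableOn ℝ F (Ioi 0) :=
    fun s hs => (hderiv s hs).differentiableAt.differentiableWithinAt
  have hmono := monotoneOn_add_one_mul_log_sub
  have hmin : IsMinOn F (Ici 0) 1 := by
    refine isMinOn_Ici_of_deriv hF.continuousAt hF.continuousAt
      (hdiff.mono Ioo_subset_Ioi_self) (hdiff.mono (Ioi_subset_Ioi zero_le_one)) ?_ ?_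
    · intro s hs
      rw [(hderiv s hs.1).deriv]
      have := hmono hs.1 (mem_Ioi.mpr one_pos) hs.2.le
      simp only [log_one] at this
      linarith
    · intro s hs
      rw [(hderiv s (one_pos.trans hs)).deriv]
      have := hmono (mem_Ioi.mpr one_pos) (mem_Ioi.mpr (one_pos.trans hs)) (le_of_lt hs)
      simp only [log_one] at this
      linarith
  have := isMinOn_iff.mp hmin t ht
  simp only [F, klFun_one] at this
  linarith

lemma three_mul_sub_sq_le_mul_mul_klFun_div {p q : ℝ} (hp : 0 ≤ p) (hq : 0 < q) :
    3 * (p - q) ^ 2 ≤ (2 * p + 4 * q) * (q * klFun (p / q)) := by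
  have hq0 := hq.ne'
  have h := three_mul_sub_one_sq_le_mul_klFun (div_nonneg hp hq.le)
  calc 3 * (p - q) ^ 2 = q ^ 2 * (3 * (p / q - 1) ^ 2) := by field_simp
    _ ≤ q ^ 2 * ((2 * (p / q) + 4) * klFun (p / q)) := by gcongr
    _ = (2 * p + 4 * q) * (q * klFun (p / q)) := by field_simp

lemma sq_sum_abs_sub_le_mul_sum_mul_klFun_div {ι : Type*} (s : Finset ι) {p q : ι → ℝ}
    (hp : ∀ i ∈ s, 0 ≤ p i) (hq : ∀ i ∈ s, 0 < q i) :
    (∑ i ∈ s, |p i - q i|) ^ 2 ≤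
      (2 * ∑ i ∈ s, p i + 4 * ∑ i ∈ s, q i) / 3 * ∑ i ∈ s, q i * klFun (p i / q i) := by
  have hweights :
      ∑ i ∈ s, (2 * p i + 4 * q i) / 3 = (2 * ∑ i ∈ s, p i + 4 * ∑ i ∈ s, q i) / 3 := by
    rw [← sum_div, sum_add_distrib, mul_sum, mul_sum]
  rw [← hweights]
  refine sum_sq_le_sum_mul_sum_of_sq_le_mul s (fun i hi => ?_) (fun i hi => ?_) (fun i hi => ?_)
  · linarith [hp i hi, hq i hi]
  · exact mul_nonneg (hq i hi).le (klFun_nonneg (div_nonneg (hp i hi) (hq i hi).le))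
  · have := three_mul_sub_sq_le_mul_mul_klFun_div (hp i hi) (hq i hi)
    rw [sq_abs]
    linarith

lemma mul_klFun_div_eq {x y : ℝ} (hx : x ≠ 0) (hy : y ≠ 0) :
    x * klFun (y / x) = (y * log y - y) - (x * log x - x) - log x * (y - x) := by
  rw [klFun_apply, log_div hy hx]
  field_simp
  ring

/-- the negative entropy `d(x) = ∑ᵢ (x i * log (x i) - x i)` is 1-strongly
convex w.r.t. the ℓ₁-norm on the relative interior of the probability simplex:
for `x, y` with strictly positive entries summing to one,
`d(y) ≥ d(x) + ⟨∇d(x), y - x⟩ + ½‖y - x‖₁²` where `∇d(x) i = log (x i)`. -/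
theorem entropy_strongly_convex_l1 (m : ℕ) (x y : Fin m → ℝ)
    (hx : ∀ i, 0 < x i) (hxs : ∑ i, x i = 1)
    (hy : ∀ i, 0 < y i) (hys : ∑ i, y i = 1) :
    (∑ i, (y i * Real.log (y i) - y i)) ≥
      (∑ i, (x i * Real.log (x i) - x i)) + (∑ i, Real.log (x i) * (y i - x i)) +
        (1 / 2 : ℝ) * (∑ i, |y i - x i|) ^ 2 := by
  have pinsker := sq_sum_abs_sub_le_mul_sum_mul_klFun_div univ
    (fun i _ => (hy i).le) (fun i _ => hx i)
  have bregman : ∑ i, x i * klFun (y i / x i) = (∑ i, (y i * log (y i) - y i)) -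
      (∑ i, (x i * log (x i) - x i)) - ∑ i, log (x i) * (y i - x i) := by
    simp only [mul_klFun_div_eq (hx _).ne' (hy _).ne', sum_sub_distrib]
  rw [hxs, hys, bregman] at pinsker
  linarith
end

section
/- Dual averaging regret bound: Let X be closed convex with 0 ∈ X, d : X → ℝ satisfy d ≥ 0, d(0) = 0, and 1-strong convexity w.r.t. ‖·‖. Let {γ_t}_{t≥0} be a non-decreasing sequence of positive reals with γ_{-1} := γ_0, let g_0, g_1, ... ∈ ℝ^m, and define ŷ_0 = 0 and ŷ_{t+1} = argmin_{x ∈ X} {⟨∑_{k=0}^t g_k, x⟩ + γ_t d(x)}. Then for every x ∈ X and t ≥ 0: ∑_{k=0}^t ⟨g_k, ŷ_k − x⟩ ≤ (1/2)∑_{k=0}^t (1/γ_{k−1})‖g_k‖_*² + γ_t d(x). -/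
/-- The dual norm of a vector `w` with respect to a norm `N` on `ℝ^m`. -/
noncomputable def dualNorm (m : ℕ) (N : (Fin m → ℝ) → ℝ) (w : Fin m → ℝ) : ℝ :=
  sSup {r : ℝ | ∃ u : Fin m → ℝ, N u ≤ 1 ∧ r = ∑ i, w i * u i}

/-!
With `S_k = g_0 + ⋯ + g_{k-1}`, every iterate `ŷ_k`, including `ŷ_0 = 0`, minimises
`⟨S_k, ·⟩ + γ_{k-1} d` over `X`. Strong convexity of `d` makes this objective grow quadratically
away from its minimiser, so the optimal values `V_k` satisfy
`V_k + ⟨g_k, ŷ_k⟩ ≤ V_{k+1} + ‖g_k‖_*² / (2 γ_{k-1})`: evaluate the `k`-th objective at `ŷ_{k+1}`,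
use `γ_{k-1} ≤ γ_k` and `d ≥ 0`, and absorb `⟨g_k, ŷ_k - ŷ_{k+1}⟩ ≤ ‖g_k‖_* ‖ŷ_{k+1} - ŷ_k‖` into
the quadratic term by AM-GM. Telescoping, with `V_0 = 0` and `V_{t+1} ≤ ⟨S_{t+1}, x⟩ + γ_t d(x)`,
gives the bound.
-/

open Metric Set Filter Topology

namespace Seminorm

variable {E : Type*} [NormedAddCommGroup E] [NormedSpace ℝ E] [FiniteDimensional ℝ E]
  (p : Seminorm ℝ E)

theorem continuous_of_finiteDimensional : Continuous p :=
  p.convexOn.locallyLipschitz.continuous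

theorem exists_norm_le_mul (hp : ∀ v, p v = 0 → v = 0) : ∃ C, ∀ u, ‖u‖ ≤ C * p u := by
  have hpos : ∀ u ∈ sphere (0 : E) 1, p u ≠ 0 := fun u hu h =>
    ne_zero_of_mem_unit_sphere ⟨u, hu⟩ (hp u h)
  obtain ⟨C, hC⟩ := (isCompact_sphere (0 : E) 1).exists_bound_of_continuousOn
    ((p.continuous_of_finiteDimensional.continuousOn).inv₀ hpos)
  refine ⟨C, fun u => ?_⟩
  rcases eq_or_ne u 0 with rfl | hu
  · simp
  have hr : 0 < ‖u‖ := norm_pos_iff.2 hu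
  have hmem : ‖u‖⁻¹ • u ∈ sphere (0 : E) 1 := by
    simp [norm_smul, hr.ne']
  have hpu : 0 < p u := (apply_nonneg p u).lt_of_ne' (fun h => hu (hp u h))
  have hbound := hC _ hmem
  simp only [Pi.inv_apply, map_smul_eq_mul, norm_inv, mul_inv_rev, inv_inv, norm_mul,
    Real.norm_eq_abs, abs_norm, abs_of_pos hpu] at hbound
  calc ‖u‖ = (p u)⁻¹ * ‖u‖ * p u := by field_simp
    _ ≤ C * p u := by gcongr

theorem isCompact_closedBall_of_finiteDimensional (hp : ∀ v, p v = 0 → v = 0) (r : ℝ) :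
    IsCompact (p.closedBall 0 r) := by
  obtain ⟨C, hC⟩ := p.exists_norm_le_mul hp
  refine Metric.isCompact_of_isClosed_isBounded ?_ ?_
  · simpa [closedBall_zero_eq] using isClosed_le p.continuous_of_finiteDimensional continuous_const
  · refine (isBounded_iff_forall_norm_le).2 ⟨|C| * r, fun u hu => ?_⟩
    rw [mem_closedBall_zero] at hu
    calc ‖u‖ ≤ C * p u := hC u
      _ ≤ |C| * p u := by gcongr; exact le_abs_self C
      _ ≤ |C| * r := by gcongr

end Seminorm

/-- Compactness of the unit ball of `p` is what makes the supremum defining `dualNorm` finite. -/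
theorem Seminorm.dotProduct_le_dualNorm_mul {m : ℕ} (p : Seminorm ℝ (Fin m → ℝ))
    (hp : ∀ v, p v = 0 → v = 0) (w v : Fin m → ℝ) : w ⬝ᵥ v ≤ dualNorm m p w * p v := by
  have hbdd : BddAbove {r : ℝ | ∃ u : Fin m → ℝ, p u ≤ 1 ∧ r = ∑ i, w i * u i} :=
    ((p.isCompact_closedBall_of_finiteDimensional hp 1).bddAbove_image
      (f := (w ⬝ᵥ ·)) (by fun_prop)).mono
      (by rintro _ ⟨u, hu, rfl⟩; exact ⟨u, by simpa using hu, rfl⟩)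
  rcases eq_or_ne v 0 with rfl | hv
  · simp
  have hpv : 0 < p v := (apply_nonneg p v).lt_of_ne' (fun h => hv (hp v h))
  have hunit : w ⬝ᵥ ((p v)⁻¹ • v) ≤ dualNorm m p w :=
    le_csSup hbdd ⟨(p v)⁻¹ • v, by simp [map_smul_eq_mul, abs_of_pos hpv, hpv.ne'], rfl⟩
  rw [dotProduct_smul, smul_eq_mul, inv_mul_le_iff₀ hpv] at hunit
  linarith

def IsStrongSubgradientOn {ι : Type*} [Fintype ι] (p : Seminorm ℝ (ι → ℝ)) (X : Set (ι → ℝ))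
    (d : (ι → ℝ) → ℝ) (Dd : (ι → ℝ) → ι → ℝ) : Prop :=
  ∀ x ∈ X, ∀ y ∈ X, d y ≥ d x + Dd x ⬝ᵥ (y - x) + 1 / 2 * p (y - x) ^ 2

namespace IsStrongSubgradientOn

section

variable {ι : Type*} [Fintype ι] {p : Seminorm ℝ (ι → ℝ)} {X : Set (ι → ℝ)}
  {d : (ι → ℝ) → ℝ} {Dd : (ι → ℝ) → ι → ℝ}

theorem apply_smul_add_smul_le (hd : IsStrongSubgradientOn p X d Dd) (hX : Convex ℝ X)
    {x y : ι → ℝ} (hx : x ∈ X) (hy : y ∈ X) {a b : ℝ} (ha : 0 ≤ a) (hb : 0 ≤ b)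
    (hab : a + b = 1) :
    d (a • x + b • y) ≤ a * d x + b * d y - a * b / 2 * p (x - y) ^ 2 := by
  obtain rfl : a = 1 - b := eq_sub_of_add_eq hab
  set z := (1 - b) • x + b • y
  have hxz : x - z = b • (x - y) := by module
  have hyz : y - z = (-(1 - b)) • (x - y) := by module
  have hx' := hd z (hX hx hy ha hb hab) x hx
  have hy' := hd z (hX hx hy ha hb hab) y hy
  rw [hxz, dotProduct_smul, map_smul_eq_mul, Real.norm_eq_abs, abs_of_nonneg hb] at hx'
  rw [hyz, dotProduct_smul, map_smul_eq_mul, Real.norm_eq_abs, abs_neg, abs_of_nonneg ha] at hy'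
  simp only [smul_eq_mul] at hx' hy'
  linarith [mul_le_mul_of_nonneg_left hx' ha, mul_le_mul_of_nonneg_left hy' hb]

/-- `Dd y` need not certify the optimality of `y`, so `y` is compared instead with the points of
the segment `[y, x]`, which are then let tend to `y`. -/
theorem add_sq_le_of_isMinOn (hd : IsStrongSubgradientOn p X d Dd) (hX : Convex ℝ X)
    {s y : ι → ℝ} {β : ℝ} (hβ : 0 ≤ β) (hy : y ∈ X)
    (hmin : IsMinOn (fun x => s ⬝ᵥ x + β * d x) X y) {x : ι → ℝ} (hx : x ∈ X) :
    s ⬝ᵥ y + β * d y + β / 2 * p (x - y) ^ 2 ≤ s ⬝ᵥ x + β * d x := by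
  have hsegment : ∀ l ∈ Ioo (0 : ℝ) 1,
      s ⬝ᵥ y + β * d y + (1 - l) * (β / 2 * p (x - y) ^ 2) ≤ s ⬝ᵥ x + β * d x := by
    rintro l ⟨hl0, hl1⟩
    have hconv := hd.apply_smul_add_smul_le hX hx hy hl0.le (sub_nonneg.2 hl1.le)
      (add_sub_cancel _ _)
    have hz := isMinOn_iff.1 hmin _ (hX hx hy hl0.le (sub_nonneg.2 hl1.le) (add_sub_cancel _ _))
    simp only [dotProduct_add, dotProduct_smul, smul_eq_mul] at hz
    refine le_of_mul_le_mul_left ?_ hl0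
    linarith [mul_le_mul_of_nonneg_left hconv hβ]
  have hlim : Tendsto (fun l : ℝ => s ⬝ᵥ y + β * d y + (1 - l) * (β / 2 * p (x - y) ^ 2))
      (𝓝[>] 0) (𝓝 (s ⬝ᵥ y + β * d y + β / 2 * p (x - y) ^ 2)) :=
    ((Continuous.tendsto' (by fun_prop) 0 _ (by simp))).mono_left nhdsWithin_le_nhds
  exact le_of_tendsto hlim (eventually_of_mem (Ioo_mem_nhdsGT one_pos) hsegment)

end

section

variable {m : ℕ} {p : Seminorm ℝ (Fin m → ℝ)} {X : Set (Fin m → ℝ)} {d : (Fin m → ℝ) → ℝ}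
  {Dd : (Fin m → ℝ) → Fin m → ℝ}

theorem dual_averaging_step (hd : IsStrongSubgradientOn p X d Dd) (hX : Convex ℝ X)
    (hp : ∀ v, p v = 0 → v = 0)
    {s g y y' : Fin m → ℝ} {β β' : ℝ} (hβ : 0 < β) (hββ' : β ≤ β') (hy : y ∈ X)
    (hmin : IsMinOn (fun x => s ⬝ᵥ x + β * d x) X y) (hy' : y' ∈ X) (hdy' : 0 ≤ d y') :
    s ⬝ᵥ y + β * d y + g ⬝ᵥ y ≤ (s + g) ⬝ᵥ y' + β' * d y' + dualNorm m p g ^ 2 / (2 * β) := by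
  have hgrowth := hd.add_sq_le_of_isMinOn hX hβ.le hy hmin hy'
  have hdual := p.dotProduct_le_dualNorm_mul hp g (y - y')
  have hamgm : dualNorm m p g * p (y' - y)
      ≤ β / 2 * p (y' - y) ^ 2 + dualNorm m p g ^ 2 / (2 * β) := by
    have := sq_nonneg (β * p (y' - y) - dualNorm m p g)
    field_simp
    nlinarith
  rw [map_sub_rev, dotProduct_sub] at hdual
  rw [add_dotProduct]
  linarith [mul_le_mul_of_nonneg_right hββ' hdy']

theorem sum_dotProduct_sub_le (hd : IsStrongSubgradientOn p X d Dd) (hX : Convex ℝ X)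
    (hp : ∀ v, p v = 0 → v = 0) (hdnn : ∀ x ∈ X, 0 ≤ d x) {β : ℕ → ℝ} (hβ : ∀ k, 0 < β k)
    (hβmono : Monotone β)
    {g y : ℕ → Fin m → ℝ} (hy : ∀ k, y k ∈ X)
    (hmin : ∀ k, IsMinOn (fun x => (∑ j ∈ Finset.range k, g j) ⬝ᵥ x + β k * d x) X (y k))
    (n : ℕ) {x : Fin m → ℝ} (hx : x ∈ X) :
    ∑ k ∈ Finset.range n, g k ⬝ᵥ (y k - x)
      ≤ ∑ k ∈ Finset.range n, dualNorm m p (g k) ^ 2 / (2 * β k) + β n * d x - β 0 * d (y 0) := by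
  let S : ℕ → Fin m → ℝ := fun k => ∑ j ∈ Finset.range k, g j
  let V : ℕ → ℝ := fun k => S k ⬝ᵥ y k + β k * d (y k)
  have hstep : ∀ k, g k ⬝ᵥ y k ≤ V (k + 1) - V k + dualNorm m p (g k) ^ 2 / (2 * β k) := by
    intro k
    have := hd.dual_averaging_step hX hp (g := g k) (hβ k) (hβmono k.le_succ) (hy k) (hmin k)
      (hy (k + 1)) (hdnn _ (hy (k + 1)))
    rw [← Finset.sum_range_succ] at this
    linarith
  have hVn : V n ≤ S n ⬝ᵥ x + β n * d x := isMinOn_iff.1 (hmin n) x hx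
  have hV0 : V 0 = β 0 * d (y 0) := by simp [V, S]
  calc ∑ k ∈ Finset.range n, g k ⬝ᵥ (y k - x)
      = ∑ k ∈ Finset.range n, g k ⬝ᵥ y k - S n ⬝ᵥ x := by
        simp only [S, dotProduct_sub, Finset.sum_sub_distrib, sum_dotProduct]
    _ ≤ ∑ k ∈ Finset.range n, (V (k + 1) - V k + dualNorm m p (g k) ^ 2 / (2 * β k))
          - S n ⬝ᵥ x := by
        gcongr with k; exact hstep k
    _ = V n - V 0 + ∑ k ∈ Finset.range n, dualNorm m p (g k) ^ 2 / (2 * β k) - S n ⬝ᵥ x := by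
        rw [Finset.sum_add_distrib, Finset.sum_range_sub]
    _ ≤ _ := by linarith

end

end IsStrongSubgradientOn

theorem dual_averaging_regret_bound_general
    (m : ℕ) (X : Set (Fin m → ℝ)) (hXconv : Convex ℝ X)
    (h0X : (0 : Fin m → ℝ) ∈ X)
    (N : (Fin m → ℝ) → ℝ)
    (hN2 : ∀ u v, N (u + v) ≤ N u + N v)
    (hN3 : ∀ (a : ℝ) (v), N (a • v) = |a| * N v)
    (hN4 : ∀ v, N v = 0 → v = 0)
    (d : (Fin m → ℝ) → ℝ) (Dd : (Fin m → ℝ) → (Fin m → ℝ))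
    (hd0 : d 0 = 0) (hdnn : ∀ x ∈ X, 0 ≤ d x)
    (hdsc : ∀ x ∈ X, ∀ y ∈ X,
      d y ≥ d x + (∑ i, Dd x i * (y i - x i)) + (1 / 2 : ℝ) * (N (y - x)) ^ 2)
    (γ : ℕ → ℝ) (hγpos : ∀ t, 0 < γ t) (hγmono : Monotone γ)
    (g : ℕ → Fin m → ℝ)
    (yhat : ℕ → Fin m → ℝ) (hy0 : yhat 0 = 0)
    (hymem : ∀ t, yhat (t + 1) ∈ X)
    (hymin : ∀ t, ∀ x ∈ X,
      (∑ i, (∑ k ∈ Finset.range (t + 1), g k) i * yhat (t + 1) i) + γ t * d (yhat (t + 1))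
        ≤ (∑ i, (∑ k ∈ Finset.range (t + 1), g k) i * x i) + γ t * d x)
    (x : Fin m → ℝ) (hx : x ∈ X) (t : ℕ) :
    ∑ k ∈ Finset.range (t + 1), (∑ i, g k i * (yhat k i - x i))
      ≤ (1 / 2 : ℝ) * ∑ k ∈ Finset.range (t + 1),
          (1 / (if k = 0 then γ 0 else γ (k - 1))) * (dualNorm m N (g k)) ^ 2
        + γ t * d x := by
  obtain ⟨p, rfl⟩ : ∃ p : Seminorm ℝ (Fin m → ℝ), ⇑p = N :=
    ⟨Seminorm.of N hN2 (by simpa only [Real.norm_eq_abs] using hN3), rfl⟩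
  have hd : IsStrongSubgradientOn p X d Dd := hdsc
  have hmem : ∀ k, yhat k ∈ X := by
    rintro (_ | k)
    · exact hy0 ▸ h0X
    · exact hymem k
  -- `γ (k - 1)` is the paper's `γ_{k-1}`, the convention `γ₋₁ = γ₀` being `0 - 1 = 0` in `ℕ`
  have hmin : ∀ k, IsMinOn (fun x => (∑ j ∈ Finset.range k, g j) ⬝ᵥ x + γ (k - 1) * d x) X
      (yhat k) := by
    rintro (_ | k) <;> refine isMinOn_iff.2 fun x hx => ?_
    · simpa [hy0, hd0] using mul_nonneg (hγpos 0).le (hdnn x hx)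
    · simpa [dotProduct] using hymin k x hx
  have hregret := hd.sum_dotProduct_sub_le hXconv hN4 hdnn (fun k => hγpos (k - 1))
    (fun _ _ hkl => hγmono (Nat.sub_le_sub_right hkl 1)) hmem hmin (t + 1) hx
  have hsum : ∑ k ∈ Finset.range (t + 1), dualNorm m p (g k) ^ 2 / (2 * γ (k - 1))
      = 1 / 2 * ∑ k ∈ Finset.range (t + 1),
          1 / (if k = 0 then γ 0 else γ (k - 1)) * dualNorm m p (g k) ^ 2 := by
    rw [Finset.mul_sum]
    refine Finset.sum_congr rfl fun k _ => ?_
    rcases k with _ | k <;> simp only [↓reduceIte, Nat.add_one_ne_zero] <;> ring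
  rw [hsum, hy0, hd0, Nat.add_sub_cancel, mul_zero, sub_zero] at hregret
  exact hregret

/-- dual averaging regret bound: with `X` closed convex containing `0`,
`d` a prox-function (nonnegative, `d 0 = 0`, 1-strongly convex w.r.t. `N`), a
non-decreasing positive sequence `γ_t` (with the convention `γ₋₁ = γ₀`), arbitrary vectors
`g_k`, `ŷ₀ = 0` and `ŷ_{t+1} = argmin_{x ∈ X} { ⟨∑_{k=0}^t g_k, x⟩ + γ_t d(x) }`, we have
`∑_{k=0}^t ⟨g_k, ŷ_k − x⟩ ≤ ½ ∑_{k=0}^t (1/γ_{k−1}) ‖g_k‖_*² + γ_t d(x)` for all `x ∈ X`. -/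
theorem dual_averaging_regret_bound
    (m : ℕ) (X : Set (Fin m → ℝ)) (hXc : IsClosed X) (hXconv : Convex ℝ X)
    (h0X : (0 : Fin m → ℝ) ∈ X)
    (N : (Fin m → ℝ) → ℝ)
    (hN1 : ∀ v, 0 ≤ N v)
    (hN2 : ∀ u v, N (u + v) ≤ N u + N v)
    (hN3 : ∀ (a : ℝ) (v), N (a • v) = |a| * N v)
    (hN4 : ∀ v, N v = 0 → v = 0)
    (d : (Fin m → ℝ) → ℝ) (Dd : (Fin m → ℝ) → (Fin m → ℝ))
    (hd0 : d 0 = 0) (hdnn : ∀ x ∈ X, 0 ≤ d x)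
    (hdsc : ∀ x ∈ X, ∀ y ∈ X,
      d y ≥ d x + (∑ i, Dd x i * (y i - x i)) + (1 / 2 : ℝ) * (N (y - x)) ^ 2)
    (γ : ℕ → ℝ) (hγpos : ∀ t, 0 < γ t) (hγmono : Monotone γ)
    (g : ℕ → Fin m → ℝ)
    (yhat : ℕ → Fin m → ℝ) (hy0 : yhat 0 = 0)
    (hymem : ∀ t, yhat (t + 1) ∈ X)
    (hymin : ∀ t, ∀ x ∈ X,
      (∑ i, (∑ k ∈ Finset.range (t + 1), g k) i * yhat (t + 1) i) + γ t * d (yhat (t + 1))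
        ≤ (∑ i, (∑ k ∈ Finset.range (t + 1), g k) i * x i) + γ t * d x)
    (x : Fin m → ℝ) (hx : x ∈ X) (t : ℕ) :
    ∑ k ∈ Finset.range (t + 1), (∑ i, g k i * (yhat k i - x i))
      ≤ (1 / 2 : ℝ) * ∑ k ∈ Finset.range (t + 1),
          (1 / (if k = 0 then γ 0 else γ (k - 1))) * (dualNorm m N (g k)) ^ 2
        + γ t * d x :=
  dual_averaging_regret_bound_general m X hXconv h0X N hN2 hN3 hN4 d Dd hd0 hdnn hdsc γ hγpos hγmono
    g yhat hy0 hymem hymin x hx t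
end

section
/- Disagreement bound for accumulated tracked gradients: Under the dynamic average consensus recursion s_{t+1} = P s_t + ∇_{t+1} − ∇_t with s_0 = ∇_0, where P is doubly stochastic with second singular value σ₂(P) < 1 and each row block ∇f_j(x_{j,l}) of ∇_l satisfies ‖∇f_j(x_{j,l})‖_* ≤ L, the accumulated deviation satisfies ‖∑_{l=0}^k s_{i,l} − ∑_{l=0}^k g_l‖_* ≤ √n L/(1 − σ₂(P)) + 2L for every agent i and every k ≥ 0, where g_l = (1/n)∑_{j=1}^n ∇f_j(x_{j,l}). -/
/-!
Summing the recursion telescopes the gradient differences, so the accumulated estimates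
`S_k = ∑_{l ≤ k} s_l` satisfy `S_{k+1} = P S_k + ∇_{k+1}`, whence `S_k = ∑_{t ≤ k} P^t ∇_{k-t}`
and the deviation of row `i` is `∑_t ∑_j ((P^t)_{ij} - 1/n) ∇f_j(x_{j,k-t})`.
Because `P` fixes `𝟏` and preserves `𝟏^⊥`, we have `P^t - 𝟏𝟏ᵀ/n = P^t (I - 𝟏𝟏ᵀ/n)`, which
contracts the Euclidean norm by `σ₂^t`; testing it against the sign pattern of a row bounds the
`ℓ¹`-norm of that row by `√n σ₂^t`. This includes `t = 0`, as `I - 𝟏𝟏ᵀ/n` is an orthogonal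
projection. With every gradient bounded by `L`, the geometric series gives `√n L / (1 - σ₂)`.
-/

open Finset Matrix

local notation "‖" x "‖₂" => ‖WithLp.toLp 2 x‖

section Euclidean

variable {ι : Type*} [Fintype ι]

lemma norm_toLp_two (x : ι → ℝ) : ‖x‖₂ = √(∑ i, x i ^ 2) := by
  simp [EuclideanSpace.norm_eq]

lemma abs_apply_le_norm_toLp_two (x : ι → ℝ) (i : ι) : |x i| ≤ ‖x‖₂ :=
  PiLp.norm_apply_le (WithLp.toLp 2 x) i

lemma norm_toLp_two_le_sqrt_card {x : ι → ℝ} (hx : ∀ i, |x i| ≤ 1) :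
    ‖x‖₂ ≤ √(Fintype.card ι) := by
  rw [norm_toLp_two]
  gcongr
  calc ∑ i, x i ^ 2 ≤ ∑ _i : ι, (1 : ℝ) := by
        gcongr with i
        simpa [sq_abs] using pow_le_one₀ (abs_nonneg (x i)) (hx i) (n := 2)
    _ = Fintype.card ι := by simp

noncomputable def centered (x : ι → ℝ) : ι → ℝ :=
  x - ((Fintype.card ι : ℝ)⁻¹ * ∑ i, x i) • 1

lemma sum_centered (x : ι → ℝ) : ∑ i, centered x i = 0 := by
  rcases isEmpty_or_nonempty ι with hι | hι
  · simp
  · simp [centered, sum_sub_distrib]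

lemma norm_centered_le (x : ι → ℝ) : ‖centered x‖₂ ≤ ‖x‖₂ := by
  set a := (Fintype.card ι : ℝ)⁻¹ * ∑ i, x i
  have hsq : ∑ i, centered x i ^ 2 = ∑ i, x i ^ 2 - a * ∑ i, x i := by
    calc ∑ i, centered x i ^ 2 = ∑ i, centered x i * x i - a * ∑ i, centered x i := by
          rw [mul_sum, ← sum_sub_distrib]
          refine sum_congr rfl fun i _ => ?_
          simp only [centered, Pi.sub_apply, Pi.smul_apply, Pi.one_apply, smul_eq_mul]
          ring
      _ = ∑ i, centered x i * x i := by rw [sum_centered, mul_zero, sub_zero]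
      _ = ∑ i, x i ^ 2 - a * ∑ i, x i := by
          simp only [centered, Pi.sub_apply, Pi.smul_apply, Pi.one_apply, smul_eq_mul, mul_one,
            sub_mul, sum_sub_distrib, ← mul_sum, sq]
          rfl
  have ha : 0 ≤ a * ∑ i, x i := by
    rw [mul_assoc, ← sq]
    positivity
  rw [norm_toLp_two, norm_toLp_two, hsq]
  exact Real.sqrt_le_sqrt (by linarith)

end Euclidean

section Consensus

variable {ι κ : Type*} [Fintype ι] [Fintype κ]

lemma sum_abs_apply_le_of_norm_mulVec_le (A : Matrix κ ι ℝ) {c : ℝ} (hc : 0 ≤ c)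
    (hA : ∀ x, ‖A *ᵥ x‖₂ ≤ c * ‖x‖₂) (i : κ) :
    ∑ j, |A i j| ≤ √(Fintype.card ι) * c := by
  set v : ι → ℝ := fun j => SignType.sign (A i j)
  have hv : ∀ j, |v j| ≤ 1 := fun j => by
    rcases lt_trichotomy (A i j) 0 with h | h | h <;> simp [v, h]
  calc ∑ j, |A i j| = (A *ᵥ v) i := by simp [v, mulVec, dotProduct]
    _ ≤ ‖A *ᵥ v‖₂ := (le_abs_self _).trans (abs_apply_le_norm_toLp_two _ i)
    _ ≤ c * √(Fintype.card ι) :=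
      (hA v).trans (mul_le_mul_of_nonneg_left (norm_toLp_two_le_sqrt_card hv) hc)
    _ = √(Fintype.card ι) * c := mul_comm _ _

lemma sum_mulVec_eq_zero {P : Matrix ι ι ℝ} (hP : 1 ᵥ* P = 1) {w : ι → ℝ}
    (hw : ∑ i, w i = 0) : ∑ i, (P *ᵥ w) i = 0 := by
  rw [← one_dotProduct, dotProduct_mulVec, hP, one_dotProduct, hw]

variable [DecidableEq ι] {P : Matrix ι ι ℝ}

lemma pow_mulVec_one (hP : P *ᵥ 1 = 1) (t : ℕ) : P ^ t *ᵥ 1 = 1 := by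
  induction t with
  | zero => simp
  | succ t ih => rw [pow_succ, ← mulVec_mulVec, hP, ih]

lemma norm_pow_mulVec_le {σ : ℝ} (hP : 1 ᵥ* P = 1) (hσ0 : 0 ≤ σ)
    (hσ : ∀ w : ι → ℝ, ∑ i, w i = 0 → ‖P *ᵥ w‖₂ ≤ σ * ‖w‖₂) (t : ℕ) {w : ι → ℝ}
    (hw : ∑ i, w i = 0) : ‖P ^ t *ᵥ w‖₂ ≤ σ ^ t * ‖w‖₂ := by
  induction t generalizing w with
  | zero => simp
  | succ t ih =>
    rw [pow_succ, ← mulVec_mulVec]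
    calc ‖P ^ t *ᵥ (P *ᵥ w)‖₂ ≤ σ ^ t * ‖P *ᵥ w‖₂ := ih (sum_mulVec_eq_zero hP hw)
      _ ≤ σ ^ t * (σ * ‖w‖₂) := mul_le_mul_of_nonneg_left (hσ w hw) (pow_nonneg hσ0 t)
      _ = σ ^ (t + 1) * ‖w‖₂ := by ring

lemma pow_sub_inv_card_mulVec (hP : P *ᵥ 1 = 1) (t : ℕ) (x : ι → ℝ) :
    (P ^ t - of fun _ _ => (Fintype.card ι : ℝ)⁻¹) *ᵥ x = P ^ t *ᵥ centered x := by
  have hJ : (of fun _ _ => (Fintype.card ι : ℝ)⁻¹ : Matrix ι ι ℝ) *ᵥ x =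
      ((Fintype.card ι : ℝ)⁻¹ * ∑ i, x i) • 1 := by
    ext i
    simp [mulVec, dotProduct, mul_sum]
  rw [centered, mulVec_sub, mulVec_smul, pow_mulVec_one hP, sub_mulVec, hJ]

lemma sum_abs_pow_apply_sub_inv_card_le {σ : ℝ} (hrow : P *ᵥ 1 = 1) (hcol : 1 ᵥ* P = 1)
    (hσ0 : 0 ≤ σ) (hσ : ∀ w : ι → ℝ, ∑ i, w i = 0 → ‖P *ᵥ w‖₂ ≤ σ * ‖w‖₂) (t : ℕ) (i : ι) :
    ∑ j, |(P ^ t) i j - (Fintype.card ι : ℝ)⁻¹| ≤ √(Fintype.card ι) * σ ^ t := by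
  have hcontr : ∀ x, ‖(P ^ t - of fun _ _ => (Fintype.card ι : ℝ)⁻¹) *ᵥ x‖₂ ≤ σ ^ t * ‖x‖₂ :=
    fun x => by
      rw [pow_sub_inv_card_mulVec hrow]
      exact (norm_pow_mulVec_le hcol hσ0 hσ t (sum_centered x)).trans
        (mul_le_mul_of_nonneg_left (norm_centered_le x) (pow_nonneg hσ0 t))
  simpa using sum_abs_apply_le_of_norm_mulVec_le _ (pow_nonneg hσ0 t) hcontr i

end Consensus

section Tracking

variable {ι E R : Type*} [Fintype ι] [Ring R] [AddCommGroup E] [Module R E]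

structure IsDynamicAverageConsensus (P : Matrix ι ι R) (g s : ℕ → ι → E) : Prop where
  init : ∀ i, s 0 i = g 0 i
  step : ∀ t i, s (t + 1) i = ∑ j, P i j • s t j + g (t + 1) i - g t i

variable {P : Matrix ι ι R} {g s : ℕ → ι → E}

lemma sum_smul_sum_smul_eq_mul (A B : Matrix ι ι R) (x : ι → E) (i : ι) :
    ∑ j, A i j • ∑ l, B j l • x l = ∑ l, (A * B) i l • x l := by
  simp only [smul_sum, smul_smul, mul_apply, sum_smul]
  exact sum_comm

lemma IsDynamicAverageConsensus.sum_range_succ_succ (h : IsDynamicAverageConsensus P g s)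
    (k : ℕ) (i : ι) :
    ∑ l ∈ range (k + 2), s l i = ∑ j, P i j • ∑ l ∈ range (k + 1), s l j + g (k + 1) i := by
  simp only [sum_range_succ' (fun l => s l i) (k + 1), h.step, add_sub_assoc, sum_add_distrib,
    sum_range_sub (fun l => g l i), h.init, smul_sum]
  rw [sum_comm]
  abel

variable [DecidableEq ι]

lemma IsDynamicAverageConsensus.sum_range (h : IsDynamicAverageConsensus P g s) (k : ℕ)
    (i : ι) :
    ∑ l ∈ range (k + 1), s l i = ∑ t ∈ range (k + 1), ∑ j, (P ^ t) i j • g (k - t) j := by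
  induction k generalizing i with
  | zero => simp [h.init, one_apply, ite_smul]
  | succ k ih =>
    rw [h.sum_range_succ_succ, sum_range_succ']
    simp only [ih, smul_sum, pow_zero, one_apply, ite_smul, one_smul, zero_smul, sum_ite_eq,
      mem_univ, if_true, Nat.sub_zero, Nat.add_sub_add_right]
    rw [sum_comm]
    congr 2 with t
    simp only [pow_succ', ← sum_smul_sum_smul_eq_mul, smul_sum]

lemma IsDynamicAverageConsensus.sum_range_sub_smul_sum (h : IsDynamicAverageConsensus P g s)
    (c : R) (k : ℕ) (i : ι) :
    (∑ l ∈ range (k + 1), s l i) - ∑ l ∈ range (k + 1), c • ∑ j, g l j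
      = ∑ t ∈ range (k + 1), ∑ j, ((P ^ t) i j - c) • g (k - t) j := by
  rw [h.sum_range, ← sum_range_reflect (fun l => c • ∑ j, g l j), ← sum_sub_distrib]
  refine sum_congr rfl fun t _ => ?_
  simp only [add_tsub_cancel_right, sub_smul, sum_sub_distrib, smul_sum]

end Tracking

namespace Seminorm

variable {E ι : Type*} [AddCommGroup E] [Module ℝ E] (p : Seminorm ℝ E)

lemma map_sum_le (s : Finset ι) (f : ι → E) : p (∑ i ∈ s, f i) ≤ ∑ i ∈ s, p (f i) :=
  le_sum_of_subadditive p (map_zero p).le (map_add_le_add p) s f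

lemma map_sum_smul_le (s : Finset ι) (c : ι → ℝ) (v : ι → E) {L : ℝ}
    (hv : ∀ j ∈ s, p (v j) ≤ L) : p (∑ j ∈ s, c j • v j) ≤ (∑ j ∈ s, |c j|) * L := by
  calc p (∑ j ∈ s, c j • v j) ≤ ∑ j ∈ s, |c j| * p (v j) := by
        simpa only [map_smul_eq_mul, Real.norm_eq_abs] using p.map_sum_le s (fun j => c j • v j)
    _ ≤ ∑ j ∈ s, |c j| * L := by gcongr with j hj; exact hv j hj
    _ = (∑ j ∈ s, |c j|) * L := (sum_mul ..).symm

end Seminorm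

lemma sum_range_geometric_le {σ : ℝ} (hσ0 : 0 ≤ σ) (hσ1 : σ < 1) (k : ℕ) :
    ∑ t ∈ range k, σ ^ t ≤ 1 / (1 - σ) := by
  simpa only [range_eq_Ico, pow_zero] using geom_sum_Ico_le_of_lt_one hσ0 hσ1 (m := 0) (n := k)

theorem accumulated_gradient_tracking_disagreement_bound_general
    (n m : ℕ)
    (P : Matrix (Fin n) (Fin n) ℝ)
    (hrow : ∀ i, ∑ j, P i j = 1) (hcol : ∀ j, ∑ i, P i j = 1)
    (σ2 : ℝ) (hσnn : 0 ≤ σ2) (hσlt : σ2 < 1)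
    (hσ : ∀ v : Fin n → ℝ, (∑ i, v i) = 0 →
      Real.sqrt (∑ i, (P.mulVec v i) ^ 2) ≤ σ2 * Real.sqrt (∑ i, (v i) ^ 2))
    (Nd : (Fin m → ℝ) → ℝ)
    (hNd2 : ∀ u v, Nd (u + v) ≤ Nd u + Nd v)
    (hNd3 : ∀ (a : ℝ) (v), Nd (a • v) = |a| * Nd v)
    (L : ℝ) (hL : 0 < L)
    (gr : ℕ → Fin n → Fin m → ℝ) (hgrB : ∀ t j, Nd (gr t j) ≤ L)
    (s : ℕ → Fin n → Fin m → ℝ)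
    (hs0 : ∀ i, s 0 i = gr 0 i)
    (hsrec : ∀ t i, s (t + 1) i = (∑ j, P i j • s t j) + gr (t + 1) i - gr t i)
    (i : Fin n) (k : ℕ) :
    Nd ((∑ l ∈ Finset.range (k + 1), s l i)
        - ∑ l ∈ Finset.range (k + 1), (n : ℝ)⁻¹ • ∑ j, gr l j)
      ≤ Real.sqrt n * L / (1 - σ2) + 2 * L := by
  have hrow' : P *ᵥ 1 = 1 := by ext i; simp [mulVec, dotProduct, hrow]
  have hcol' : 1 ᵥ* P = 1 := by ext j; simp [vecMul, dotProduct, hcol]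
  have hσ' : ∀ v : Fin n → ℝ, ∑ i, v i = 0 → ‖P *ᵥ v‖₂ ≤ σ2 * ‖v‖₂ := by
    simpa only [norm_toLp_two] using hσ
  have hR : ∀ t, ∑ j, |(P ^ t) i j - (n : ℝ)⁻¹| ≤ √n * σ2 ^ t := fun t => by
    simpa using sum_abs_pow_apply_sub_inv_card_le hrow' hcol' hσnn hσ' t i
  let p : Seminorm ℝ (Fin m → ℝ) := Seminorm.of Nd hNd2 fun a v => by rw [hNd3, Real.norm_eq_abs]
  rw [IsDynamicAverageConsensus.sum_range_sub_smul_sum ⟨hs0, hsrec⟩]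
  calc p (∑ t ∈ range (k + 1), ∑ j, ((P ^ t) i j - (n : ℝ)⁻¹) • gr (k - t) j)
      ≤ ∑ t ∈ range (k + 1), (∑ j, |(P ^ t) i j - (n : ℝ)⁻¹|) * L :=
        (p.map_sum_le _ _).trans <| sum_le_sum fun t _ =>
          p.map_sum_smul_le _ _ _ fun j _ => hgrB _ j
    _ ≤ ∑ t ∈ range (k + 1), √n * σ2 ^ t * L :=
        sum_le_sum fun t _ => mul_le_mul_of_nonneg_right (hR t) hL.le
    _ = √n * L * ∑ t ∈ range (k + 1), σ2 ^ t := by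
        rw [mul_sum]
        exact sum_congr rfl fun t _ => by ring
    _ ≤ √n * L * (1 / (1 - σ2)) := by
        gcongr
        exact sum_range_geometric_le hσnn hσlt _
    _ ≤ √n * L / (1 - σ2) + 2 * L := by
        rw [mul_one_div]
        linarith

/-- disagreement bound for accumulated tracked gradients: under the dynamic
average consensus recursion `s_{i,t+1} = ∑ⱼ p_{ij} s_{j,t} + ∇f_i(x_{i,t+1}) − ∇f_i(x_{i,t})`
with `s_{i,0} = ∇f_i(x_{i,0})`, `P` doubly stochastic with second singular value `σ₂ < 1`
(characterized by contraction on vectors orthogonal to `𝟏`), and all subgradients bounded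
by `L` in a dual norm `Nd`, we have
`‖∑_{l=0}^k s_{i,l} − ∑_{l=0}^k g_l‖_* ≤ √n L/(1 − σ₂) + 2L` where
`g_l = (1/n) ∑ⱼ ∇f_j(x_{j,l})`. -/
theorem accumulated_gradient_tracking_disagreement_bound
    (n m : ℕ) (hn : 0 < n)
    (P : Matrix (Fin n) (Fin n) ℝ)
    (hpos : ∀ i j, 0 ≤ P i j)
    (hrow : ∀ i, ∑ j, P i j = 1) (hcol : ∀ j, ∑ i, P i j = 1)
    (σ2 : ℝ) (hσnn : 0 ≤ σ2) (hσlt : σ2 < 1)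
    (hσ : ∀ v : Fin n → ℝ, (∑ i, v i) = 0 →
      Real.sqrt (∑ i, (P.mulVec v i) ^ 2) ≤ σ2 * Real.sqrt (∑ i, (v i) ^ 2))
    (Nd : (Fin m → ℝ) → ℝ)
    (hNd1 : ∀ v, 0 ≤ Nd v)
    (hNd2 : ∀ u v, Nd (u + v) ≤ Nd u + Nd v)
    (hNd3 : ∀ (a : ℝ) (v), Nd (a • v) = |a| * Nd v)
    (L : ℝ) (hL : 0 < L)
    (gr : ℕ → Fin n → Fin m → ℝ) (hgrB : ∀ t j, Nd (gr t j) ≤ L)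
    (s : ℕ → Fin n → Fin m → ℝ)
    (hs0 : ∀ i, s 0 i = gr 0 i)
    (hsrec : ∀ t i, s (t + 1) i = (∑ j, P i j • s t j) + gr (t + 1) i - gr t i)
    (i : Fin n) (k : ℕ) :
    Nd ((∑ l ∈ Finset.range (k + 1), s l i)
        - ∑ l ∈ Finset.range (k + 1), (n : ℝ)⁻¹ • ∑ j, gr l j)
      ≤ Real.sqrt n * L / (1 - σ2) + 2 * L :=
  accumulated_gradient_tracking_disagreement_bound_general n m P hrow hcol σ2 hσnn hσlt hσ Nd hNd2
    hNd3 L hL gr hgrB s hs0 hsrec i k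
end
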